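/- arXiv:quant-ph/0602113 — 5 statements merged into one kernel-verified Lean document; each statement's English description precedes it below -/
import Mathlib

section
/- Let C1 be a t-dimensional linear subspace of F_2^n and let l ≥ 0 be an integer with t + l ≤ n. Let μ be a probability distribution on the set of (t+l)-dimensional linear subspaces C2 of F_2^n containing C1 such that for every x ∈ F_2^n \ C1 the μ-probability of the event {C2 : x ∈ C2} equals (2^{l+t} − 2^t)/(2^n − 2^t). For each subspace C2 in the support of μ let Γ_{C2} ⊆ F_2^n be a set containing, for each coset of C2 in F_2^n, exactly one element of minimal Hamming weight in that coset, and set Γ_{C2} + C1 := {γ + c : γ ∈ Γ_{C2}, c ∈ C1}. Then for every probability distribution P on F_2^n, E_{C2∼μ}[1 − P(Γ_{C2} + C1)] ≤ Σ_{k=0}^{n} P̃(k)·g(2^{l+t−n}|n,k), where P̃(k) := P({x ∈ F_2^n : |x| = k}) and g(x|n,k) := min{2^{n·h̄(k/n)}·x, 1} if k ≤ ⌊n/2⌋ and g(x|n,k) := 1 if k > ⌊n/2⌋. -/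
/-!
Fix a received word `y` of weight `k`. If decoding fails for the code `C2`, the coset leader `γ`
of `y + C2` gives the codeword `y - γ ∈ C2 \ C1`, whose distance `|γ|` to `y` is at most `|y| = k`.
By the union bound over the Hamming ball of radius `k` around `y`, the failure probability is at
most `|B(k)|·(2^{l+t} − 2^t)/(2^n − 2^t) ≤ 2^{n·h(k/n)}·2^{l+t−n}` for `2k ≤ n`, where
`|B(k)| ≤ Σ_{j ≤ k} C(n, j) ≤ 2^{n·h(k/n)}` is the usual entropy bound, obtained from
`(p + (1 − p))^n ≥ Σ_{j ≤ k} C(n, j) p^j (1 − p)^{n−j}` at `p = k/n`. Averaging over `y ∼ P` gives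
the theorem.
-/

open scoped Classical

/-- Binary entropy with base-2 logarithm, with the convention `0 * log 0 = 0`. -/
noncomputable def h2 (x : ℝ) : ℝ := -(x * Real.logb 2 x) - (1 - x) * Real.logb 2 (1 - x)

/-- `h̄(x) = h(x)` for `x < 1/2` and `h̄(x) = 1` for `x ≥ 1/2`. -/
noncomputable def hbar (x : ℝ) : ℝ := if x < 1 / 2 then h2 x else 1

/-- `g(x|n,k) = min{2^{n·h̄(k/n)}·x, 1}` if `k ≤ ⌊n/2⌋`, and `g(x|n,k) = 1` otherwise. -/
noncomputable def g (x : ℝ) (n k : ℕ) : ℝ :=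
  if k ≤ n / 2 then min (2 ^ ((n : ℝ) * hbar ((k : ℝ) / n)) * x) 1 else 1

open Finset

lemma h2_one_half : h2 (1 / 2) = 1 := by
  have hlog : Real.logb 2 (1 / 2) = -1 := by
    rw [one_div, Real.logb_inv, Real.logb_self_eq_one one_lt_two]
  rw [h2, show (1 : ℝ) - 1 / 2 = 1 / 2 by norm_num, hlog]
  norm_num

lemma hbar_of_le_half {x : ℝ} (hx : x ≤ 1 / 2) : hbar x = h2 x := by
  rw [hbar]
  split_ifs with hlt
  · rfl
  · rw [le_antisymm hx (not_lt.1 hlt), h2_one_half]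

lemma natCast_div_le_half {n k : ℕ} (hk : 2 * k ≤ n) : (k : ℝ) / n ≤ 1 / 2 := by
  rcases n.eq_zero_or_pos with rfl | hn
  · simp
  · rw [div_le_iff₀ (by exact_mod_cast hn)]
    have : (2 * k : ℝ) ≤ n := by exact_mod_cast hk
    linarith

lemma g_of_le_half {x : ℝ} {n k : ℕ} (hk : k ≤ n / 2) :
    g x n k = min (2 ^ ((n : ℝ) * h2 ((k : ℝ) / n)) * x) 1 := by
  rw [g, if_pos hk, hbar_of_le_half (natCast_div_le_half (by omega))]

lemma two_rpow_mul_h2_mul_pow {n k : ℕ} (hk : 0 < k) (hkn : k < n) :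
    (2 : ℝ) ^ ((n : ℝ) * h2 ((k : ℝ) / n)) *
      (((k : ℝ) / n) ^ k * (1 - (k : ℝ) / n) ^ (n - k)) = 1 := by
  set p : ℝ := (k : ℝ) / n
  have hn : (0 : ℝ) < n := by exact_mod_cast hk.trans hkn
  have hp : 0 < p := by positivity
  have hq : 0 < 1 - p := by
    rw [sub_pos, div_lt_one hn]; exact_mod_cast hkn
  have hexp : (n : ℝ) * h2 p
      = -((k : ℕ) * Real.logb 2 p + ((n - k : ℕ) : ℝ) * Real.logb 2 (1 - p)) := by
    have hnp : (n : ℝ) * p = k := mul_div_cancel₀ _ hn.ne'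
    rw [h2, Nat.cast_sub hkn.le]
    linear_combination (Real.logb 2 (1 - p) - Real.logb 2 p) * hnp
  have hlog (x : ℝ) (hx : 0 < x) (m : ℕ) : (2 : ℝ) ^ ((m : ℝ) * Real.logb 2 x) = x ^ m := by
    rw [mul_comm, Real.rpow_mul zero_le_two, Real.rpow_logb zero_lt_two (by norm_num) hx,
      Real.rpow_natCast]
  rw [hexp, Real.rpow_neg zero_le_two, Real.rpow_add zero_lt_two, hlog p hp, hlog (1 - p) hq]
  exact inv_mul_cancel₀ (by positivity)

lemma pow_mul_one_sub_pow_le_of_le {p : ℝ} (hp : 0 ≤ p) (hp2 : p ≤ 1 / 2) {j k n : ℕ}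
    (hjk : j ≤ k) (hkn : k ≤ n) :
    p ^ k * (1 - p) ^ (n - k) ≤ p ^ j * (1 - p) ^ (n - j) := by
  obtain ⟨d, rfl⟩ := Nat.exists_eq_add_of_le hjk
  rw [show n - j = d + (n - (j + d)) by omega, pow_add, pow_add, mul_assoc]
  have hq : 0 ≤ 1 - p := by linarith
  gcongr
  linarith

lemma sum_range_choose_le_two_rpow_h2 {n k : ℕ} (hk : 2 * k ≤ n) :
    ∑ j ∈ range (k + 1), (n.choose j : ℝ) ≤ 2 ^ ((n : ℝ) * h2 ((k : ℝ) / n)) := by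
  rcases k.eq_zero_or_pos with rfl | hk0
  · simp [h2]
  set p : ℝ := (k : ℝ) / n
  have hp : 0 ≤ p := by positivity
  have hp2 : p ≤ 1 / 2 := natCast_div_le_half hk
  have hbinom : (∑ j ∈ range (k + 1), (n.choose j : ℝ)) * (p ^ k * (1 - p) ^ (n - k)) ≤ 1 :=
    calc (∑ j ∈ range (k + 1), (n.choose j : ℝ)) * (p ^ k * (1 - p) ^ (n - k))
        ≤ ∑ j ∈ range (k + 1), (n.choose j : ℝ) * (p ^ j * (1 - p) ^ (n - j)) := by
          rw [sum_mul]
          refine sum_le_sum fun j hj => ?_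
          have hjk : j ≤ k := Nat.lt_succ_iff.1 (mem_range.1 hj)
          exact mul_le_mul_of_nonneg_left (pow_mul_one_sub_pow_le_of_le hp hp2 hjk (by omega))
            (Nat.cast_nonneg _)
      _ ≤ ∑ j ∈ range (n + 1), (n.choose j : ℝ) * (p ^ j * (1 - p) ^ (n - j)) := by
          refine sum_le_sum_of_subset_of_nonneg (range_subset_range.2 (by omega)) fun j _ _ => ?_
          have : 0 ≤ 1 - p := by linarith
          positivity
      _ = (p + (1 - p)) ^ n := by rw [add_pow]; exact sum_congr rfl fun j _ => by ring
      _ = 1 := by simp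
  have hentropy := two_rpow_mul_h2_mul_pow hk0 (show k < n by omega)
  nlinarith [show (0 : ℝ) ≤ 2 ^ ((n : ℝ) * h2 p) by positivity]

lemma support_injective_zmod_two {ι : Type*} [Fintype ι] :
    Function.Injective fun x : ι → ZMod 2 => univ.filter fun i => x i ≠ 0 := by
  intro x y hxy
  funext i
  have hi := congrArg (i ∈ ·) hxy
  simp only [mem_filter, mem_univ, true_and, eq_iff_iff] at hi
  revert hi
  generalize x i = a
  generalize y i = b
  decide +revert

lemma card_hammingNorm_le_le_sum_choose {ι : Type*} [Fintype ι] [DecidableEq ι] (k : ℕ) :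
    #(univ.filter fun x : ι → ZMod 2 => hammingNorm x ≤ k)
      ≤ ∑ j ∈ range (k + 1), (Fintype.card ι).choose j := by
  calc #(univ.filter fun x : ι → ZMod 2 => hammingNorm x ≤ k)
      ≤ #((range (k + 1)).biUnion fun j => powersetCard j (univ : Finset ι)) := by
        refine card_le_card_of_injOn _ (fun x hx => ?_) support_injective_zmod_two.injOn
        simp only [coe_filter, mem_univ, true_and, Set.mem_ofPred_eq] at hx
        simp only [coe_biUnion, coe_range, Set.mem_Iio, mem_coe, mem_powersetCard,
          subset_univ, true_and, Set.mem_iUnion, exists_prop]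
        exact ⟨_, Nat.lt_succ_of_le hx, rfl⟩
    _ ≤ ∑ j ∈ range (k + 1), (Fintype.card ι).choose j := by
        refine card_biUnion_le.trans_eq (sum_congr rfl fun j _ => ?_)
        rw [card_powersetCard, card_univ]

lemma sum_ite_le_sum_sum_ite {Ω ι : Type*} [Fintype Ω] {μ : Ω → ℝ} (hμ0 : ∀ ω, 0 ≤ μ ω)
    {p : Ω → Prop} [DecidablePred p] {s : Finset ι} {E : ι → Ω → Prop} [∀ x, DecidablePred (E x)]
    (hcover : ∀ ω, μ ω ≠ 0 → p ω → ∃ x ∈ s, E x ω) :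
    ∑ ω, (if p ω then μ ω else 0) ≤ ∑ x ∈ s, ∑ ω, (if E x ω then μ ω else 0) := by
  rw [sum_comm]
  refine sum_le_sum fun ω _ => ?_
  have hnonneg : ∀ x ∈ s, 0 ≤ if E x ω then μ ω else 0 := fun x _ => ite_nonneg (hμ0 ω) le_rfl
  by_cases hp : p ω
  · by_cases hμ : μ ω = 0
    · simp [hμ]
    obtain ⟨x, hx, hE⟩ := hcover ω hμ hp
    simpa [hp, hE] using single_le_sum hnonneg hx
  · simp [hp, sum_nonneg hnonneg]

lemma sub_div_sub_le_div {a b c : ℝ} (hc : 0 ≤ c) (hca : c ≤ a) (hab : a ≤ b) :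
    (a - c) / (b - c) ≤ a / b := by
  rcases (hca.trans hab).eq_or_lt with hcb | hcb
  · rw [← hcb, sub_self, div_zero]
    exact div_nonneg (hc.trans hca) hc
  · rw [div_le_div_iff₀ (sub_pos.2 hcb) (hc.trans_lt hcb)]
    nlinarith

lemma sum_mul_one_sub_sum_filter {Ω α : Type*} [Fintype Ω] [Fintype α] (μ : Ω → ℝ)
    {P : α → ℝ} (hP1 : ∑ y, P y = 1) (p : Ω → α → Prop) [∀ ω, DecidablePred (p ω)] :
    ∑ ω, μ ω * (1 - ∑ y ∈ univ.filter (p ω), P y)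
      = ∑ y, P y * ∑ ω, (if ¬ p ω y then μ ω else 0) := by
  have hcompl (ω : Ω) : 1 - ∑ y ∈ univ.filter (p ω), P y = ∑ y, if ¬ p ω y then P y else 0 := by
    rw [← hP1, ← sum_filter_add_sum_filter_not univ (p ω), add_sub_cancel_left, sum_filter]
  simp_rw [hcompl, mul_sum]
  rw [sum_comm]
  exact sum_congr rfl fun y _ => sum_congr rfl fun ω _ => by split_ifs <;> ring

lemma sum_range_sum_fiber_mul {α : Type*} [Fintype α] {f : α → ℕ} {n : ℕ} (hf : ∀ x, f x ≤ n)
    (P : α → ℝ) (G : ℕ → ℝ) :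
    ∑ k ∈ range (n + 1), (∑ x ∈ univ.filter (fun x => f x = k), P x) * G k
      = ∑ x, P x * G (f x) := by
  rw [← sum_fiberwise_of_maps_to (g := f) (t := range (n + 1))
    fun x _ => mem_range.2 (Nat.lt_succ_of_le (hf x))]
  refine sum_congr rfl fun k _ => ?_
  rw [sum_mul]
  exact sum_congr rfl fun x hx => by rw [(mem_filter.1 hx).2]

lemma sum_failure_le_card_mul {ι Ω : Type*} [Fintype ι] [DecidableEq ι] [Fintype Ω]
    {μ : Ω → ℝ} {C1 : Submodule (ZMod 2) (ι → ZMod 2)} {C2 : Ω → Submodule (ZMod 2) (ι → ZMod 2)}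
    {Γ : Ω → Finset (ι → ZMod 2)} (hμ0 : ∀ ω, 0 ≤ μ ω) {q : ℝ}
    (hprob : ∀ x, x ∉ C1 → ∑ ω, (if x ∈ C2 ω then μ ω else 0) = q)
    (hΓuniq : ∀ ω, μ ω ≠ 0 → ∀ y, ∃! γ, γ ∈ Γ ω ∧ y - γ ∈ C2 ω)
    (hΓmin : ∀ ω, μ ω ≠ 0 → ∀ γ ∈ Γ ω, ∀ y, y - γ ∈ C2 ω → hammingNorm γ ≤ hammingNorm y)
    (y : ι → ZMod 2) :
    ∑ ω, (if ¬ ∃ γ ∈ Γ ω, ∃ c ∈ C1, y = γ + c then μ ω else 0)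
      ≤ #(univ.filter fun x => x ∉ C1 ∧ hammingNorm (y - x) ≤ hammingNorm y) * q := by
  calc ∑ ω, (if ¬ ∃ γ ∈ Γ ω, ∃ c ∈ C1, y = γ + c then μ ω else 0)
      ≤ ∑ x ∈ univ.filter (fun x => x ∉ C1 ∧ hammingNorm (y - x) ≤ hammingNorm y),
          ∑ ω, (if x ∈ C2 ω then μ ω else 0) := by
        refine sum_ite_le_sum_sum_ite hμ0 fun ω hμ hfail => ?_
        obtain ⟨γ, ⟨hγ, hyγ⟩, -⟩ := hΓuniq ω hμ y
        refine ⟨y - γ, mem_filter.2 ⟨mem_univ _, fun hC1 => hfail ⟨γ, hγ, y - γ, hC1, ?_⟩, ?_⟩, hyγ⟩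
        · abel
        · rw [sub_sub_cancel]; exact hΓmin ω hμ γ hγ y hyγ
    _ = _ := by
        rw [sum_congr rfl fun x hx => hprob x (mem_filter.1 hx).2.1, sum_const, nsmul_eq_mul]

lemma sum_failure_le_g {Ω : Type*} [Fintype Ω] {μ : Ω → ℝ} {n t l : ℕ} (htl : t + l ≤ n)
    {C1 : Submodule (ZMod 2) (Fin n → ZMod 2)} {C2 : Ω → Submodule (ZMod 2) (Fin n → ZMod 2)}
    {Γ : Ω → Finset (Fin n → ZMod 2)} (hμ0 : ∀ ω, 0 ≤ μ ω) (hμ1 : ∑ ω, μ ω = 1)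
    (hprob : ∀ x, x ∉ C1 →
      ∑ ω, (if x ∈ C2 ω then μ ω else 0) = ((2 : ℝ) ^ (l + t) - 2 ^ t) / (2 ^ n - 2 ^ t))
    (hΓuniq : ∀ ω, μ ω ≠ 0 → ∀ y, ∃! γ, γ ∈ Γ ω ∧ y - γ ∈ C2 ω)
    (hΓmin : ∀ ω, μ ω ≠ 0 → ∀ γ ∈ Γ ω, ∀ y, y - γ ∈ C2 ω → hammingNorm γ ≤ hammingNorm y)
    (y : Fin n → ZMod 2) :
    ∑ ω, (if ¬ ∃ γ ∈ Γ ω, ∃ c ∈ C1, y = γ + c then μ ω else 0)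
      ≤ g ((2 : ℝ) ^ (l + t) / 2 ^ n) n (hammingNorm y) := by
  set F := ∑ ω, (if ¬ ∃ γ ∈ Γ ω, ∃ c ∈ C1, y = γ + c then μ ω else 0)
  have hF1 : F ≤ 1 := hμ1 ▸ sum_le_sum fun ω _ => by split_ifs <;> simp [hμ0 ω]
  by_cases hk : hammingNorm y ≤ n / 2
  swap
  · rwa [g, if_neg hk]
  rw [g_of_le_half hk]
  refine le_min ?_ hF1
  have hX : ((2 : ℝ) ^ (l + t) - 2 ^ t) / (2 ^ n - 2 ^ t) ≤ (2 : ℝ) ^ (l + t) / 2 ^ n :=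
    sub_div_sub_le_div (by positivity) (pow_le_pow_right₀ one_le_two (by omega))
      (pow_le_pow_right₀ one_le_two (by omega))
  have hball : #(univ.filter fun x => x ∉ C1 ∧ hammingNorm (y - x) ≤ hammingNorm y)
      ≤ #(univ.filter fun x : Fin n → ZMod 2 => hammingNorm x ≤ hammingNorm y) :=
    card_le_card_of_injOn (y - ·) (fun x hx => by simpa using (mem_filter.1 hx).2.2)
      fun x _ x' _ h => sub_right_injective h
  have hchoose := card_hammingNorm_le_le_sum_choose (ι := Fin n) (hammingNorm y)
  rw [Fintype.card_fin] at hchoose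
  calc F ≤ #(univ.filter fun x => x ∉ C1 ∧ hammingNorm (y - x) ≤ hammingNorm y) *
          (((2 : ℝ) ^ (l + t) - 2 ^ t) / (2 ^ n - 2 ^ t)) :=
        sum_failure_le_card_mul hμ0 hprob hΓuniq hΓmin y
    _ ≤ #(univ.filter fun x => x ∉ C1 ∧ hammingNorm (y - x) ≤ hammingNorm y) *
          ((2 : ℝ) ^ (l + t) / 2 ^ n) := by gcongr
    _ ≤ (∑ j ∈ range (hammingNorm y + 1), (n.choose j : ℝ)) * ((2 : ℝ) ^ (l + t) / 2 ^ n) := by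
        gcongr
        exact_mod_cast hball.trans hchoose
    _ ≤ _ := by
        gcongr
        exact sum_range_choose_le_two_rpow_h2 (by omega)

theorem stmt_0_general (n t l : ℕ) (htl : t + l ≤ n)
    (C1 : Submodule (ZMod 2) (Fin n → ZMod 2))
    (Ω : Type) [Fintype Ω] (μ : Ω → ℝ)
    (hμ0 : ∀ ω, 0 ≤ μ ω) (hμ1 : ∑ ω, μ ω = 1)
    (C2 : Ω → Submodule (ZMod 2) (Fin n → ZMod 2))
    (hprob : ∀ x : Fin n → ZMod 2, x ∉ C1 →
      ∑ ω, (if x ∈ C2 ω then μ ω else 0) = ((2 : ℝ) ^ (l + t) - 2 ^ t) / (2 ^ n - 2 ^ t))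
    (Γ : Ω → Finset (Fin n → ZMod 2))
    (hΓuniq : ∀ ω, μ ω ≠ 0 → ∀ y : Fin n → ZMod 2, ∃! γ, γ ∈ Γ ω ∧ y - γ ∈ C2 ω)
    (hΓmin : ∀ ω, μ ω ≠ 0 → ∀ γ ∈ Γ ω, ∀ y : Fin n → ZMod 2, y - γ ∈ C2 ω →
      hammingNorm γ ≤ hammingNorm y)
    (P : (Fin n → ZMod 2) → ℝ) (hP0 : ∀ x, 0 ≤ P x) (hP1 : ∑ x, P x = 1) :
    ∑ ω, μ ω *
        (1 - ∑ y ∈ Finset.univ.filter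
            (fun y : Fin n → ZMod 2 => ∃ γ ∈ Γ ω, ∃ c ∈ C1, y = γ + c), P y)
      ≤ ∑ k ∈ Finset.range (n + 1),
          (∑ x ∈ Finset.univ.filter (fun x : Fin n → ZMod 2 => hammingNorm x = k), P x) *
            g ((2 : ℝ) ^ (l + t) / 2 ^ n) n k := by
  rw [sum_mul_one_sub_sum_filter μ hP1,
    sum_range_sum_fiber_mul fun x => hammingNorm_le_card_fintype.trans_eq (Fintype.card_fin n)]
  exact sum_le_sum fun y _ =>
    mul_le_mul_of_nonneg_left (sum_failure_le_g htl hμ0 hμ1 hprob hΓuniq hΓmin y) (hP0 y)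

/-- Random-coding bound for minimum-Hamming-distance decoding: if the
`(t+l)`-dimensional code `C2 ⊇ C1` is chosen at random so that every `x ∉ C1` lies in `C2`
with probability `(2^{l+t}−2^t)/(2^n−2^t)`, and `Γ_{C2}` is a set of minimal-weight coset
representatives for `C2`, then for any distribution `P` on `F_2^n`,
`E[1 − P(Γ_{C2} + C1)] ≤ Σ_k P̃(k)·g(2^{l+t−n}|n,k)`. -/
theorem stmt_0 (n t l : ℕ) (htl : t + l ≤ n)
    (C1 : Submodule (ZMod 2) (Fin n → ZMod 2))
    (hC1rk : Module.finrank (ZMod 2) C1 = t)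
    (Ω : Type) [Fintype Ω] (μ : Ω → ℝ)
    (hμ0 : ∀ ω, 0 ≤ μ ω) (hμ1 : ∑ ω, μ ω = 1)
    (C2 : Ω → Submodule (ZMod 2) (Fin n → ZMod 2))
    (hC2le : ∀ ω, μ ω ≠ 0 → C1 ≤ C2 ω)
    (hC2rk : ∀ ω, μ ω ≠ 0 → Module.finrank (ZMod 2) (C2 ω) = t + l)
    (hprob : ∀ x : Fin n → ZMod 2, x ∉ C1 →
      ∑ ω, (if x ∈ C2 ω then μ ω else 0) = ((2 : ℝ) ^ (l + t) - 2 ^ t) / (2 ^ n - 2 ^ t))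
    (Γ : Ω → Finset (Fin n → ZMod 2))
    (hΓuniq : ∀ ω, μ ω ≠ 0 → ∀ y : Fin n → ZMod 2, ∃! γ, γ ∈ Γ ω ∧ y - γ ∈ C2 ω)
    (hΓmin : ∀ ω, μ ω ≠ 0 → ∀ γ ∈ Γ ω, ∀ y : Fin n → ZMod 2, y - γ ∈ C2 ω →
      hammingNorm γ ≤ hammingNorm y)
    (P : (Fin n → ZMod 2) → ℝ) (hP0 : ∀ x, 0 ≤ P x) (hP1 : ∑ x, P x = 1) :
    ∑ ω, μ ω *
        (1 - ∑ y ∈ Finset.univ.filter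
            (fun y : Fin n → ZMod 2 => ∃ γ ∈ Γ ω, ∃ c ∈ C1, y = γ + c), P y)
      ≤ ∑ k ∈ Finset.range (n + 1),
          (∑ x ∈ Finset.univ.filter (fun x : Fin n → ZMod 2 => hammingNorm x = k), P x) *
            g ((2 : ℝ) ^ (l + t) / 2 ^ n) n k :=
  stmt_0_general n t l htl C1 Ω μ hμ0 hμ1 C2 hprob Γ hΓuniq hΓmin P hP0 hP1
end

section
/- Let C2 ⊆ C1 ⊆ F_2^n be linear subspaces, let x ∈ F_2^n, z2 ∈ F_2^n, and z1 ∈ C2^⊥ := {z ∈ F_2^n : z·c = 0 for all c ∈ C2}. Let R ⊆ C1 be a set containing exactly one element of each coset of C2 in C1. Then |x, z1+z2⟩_{C1} = |C1/C2|^{−1/2}·Σ_{x1∈R} (−1)^{(z1+z2)·x1}·|x+x1, z2⟩_{C2}; moreover each summand (−1)^{(z1+z2)·x1}·|x+x1, z2⟩_{C2} depends only on the coset x1 + C2 and not on the chosen representative x1. -/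
/-!
Every `y ∈ C₁` is uniquely `x₁ + c` with `x₁ ∈ R`, `c ∈ C₂`, so the sum defining `|x, z₁ + z₂⟩_{C₁}`
splits into an outer sum over `R` and inner sums over `C₂`. Since `z₁ ⊥ C₂`, the sign
`(−1)^{(z₁+z₂)·(x₁+c)}` factors as `(−1)^{(z₁+z₂)·x₁} (−1)^{z₂·c}`, so the inner sum at `x₁` is
`(−1)^{(z₁+z₂)·x₁} |C₂|^{1/2} |x + x₁, z₂⟩_{C₂}`, and `|C₁/C₂|^{−1/2} |C₂|^{−1/2} = |C₁|^{−1/2}`.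
Independence of the representative comes from `|x + c, z⟩_C = (−1)^{z·c} |x, z⟩_C` for `c ∈ C`
and `((−1)^{z₂·c})² = 1`.
-/

open scoped Classical

/-- The sign `(−1)^a` of an element `a ∈ F_2`. -/
def sgn (a : ZMod 2) : ℝ := if a = 0 then 1 else -1

/-- The coset state `|x,z⟩_C = |C|^{−1/2}·Σ_{x'∈C} (−1)^{z·x'}·e_{x+x'}`. -/
noncomputable def cosetState (n : ℕ) (C : Submodule (ZMod 2) (Fin n → ZMod 2))
    (x z : Fin n → ZMod 2) : (Fin n → ZMod 2) → ℂ :=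
  fun w => (((Real.sqrt (Fintype.card C))⁻¹ : ℝ) : ℂ) *
    ∑ x' : C, ((sgn (∑ i, z i * (x' : Fin n → ZMod 2) i) : ℝ) : ℂ) *
      (if w = x + (x' : Fin n → ZMod 2) then 1 else 0)

lemma sgn_add (a b : ZMod 2) : sgn (a + b) = sgn a * sgn b := by
  obtain rfl | rfl : a = 0 ∨ a = 1 := by revert a; decide
  all_goals obtain rfl | rfl : b = 0 ∨ b = 1 := by revert b; decide
  all_goals simp [sgn, show (1 : ZMod 2) + 1 = 0 from rfl]

lemma sgn_mul_self (a : ZMod 2) : sgn a * sgn a = 1 := by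
  rw [← sgn_add, CharTwo.add_self_eq_zero, sgn, if_pos rfl]

lemma ofReal_sgn_mul_self (a : ZMod 2) : (sgn a : ℂ) * sgn a = 1 := by
  exact_mod_cast sgn_mul_self a

lemma sgn_add_dotProduct_add {ι : Type*} [Fintype ι] {z₁ c : ι → ZMod 2} (h : z₁ ⬝ᵥ c = 0)
    (z₂ r : ι → ZMod 2) :
    sgn ((z₁ + z₂) ⬝ᵥ (r + c)) = sgn ((z₁ + z₂) ⬝ᵥ r) * sgn (z₂ ⬝ᵥ c) := by
  rw [dotProduct_add, add_dotProduct z₁ z₂ c, h, zero_add, sgn_add]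

lemma inv_sqrt_div_mul_inv_sqrt (a : ℝ) {b : ℝ} (hb : 0 < b) :
    (√(a / b))⁻¹ * (√b)⁻¹ = (√a)⁻¹ := by
  rw [Real.sqrt_div' a hb.le, ← mul_inv, div_mul_cancel₀ _ (Real.sqrt_pos.2 hb).ne']

lemma Submodule.sum_eq_sum_transversal_sum {R M β : Type*} [Ring R] [AddCommGroup M] [Module R M]
    [AddCommMonoid β] {H K : Submodule R M} [Fintype H] [Fintype K] (hHK : H ≤ K)
    {T : Finset M} (hTK : ∀ t ∈ T, t ∈ K) (hT : ∀ y ∈ K, ∃! t, t ∈ T ∧ y - t ∈ H)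
    (f : M → β) :
    ∑ y : K, f y = ∑ t ∈ T, ∑ c : H, f (t + c) := by
  let e : T × H → K := fun p => ⟨p.1 + p.2, K.add_mem (hTK _ p.1.2) (hHK p.2.2)⟩
  have he : Function.Bijective e := by
    constructor
    · rintro ⟨t, c⟩ ⟨t', c'⟩ h
      have hsum : (t : M) + c = t' + c' := congrArg Subtype.val h
      have htt' : (t : M) = t' := (hT _ (e (t, c)).2).unique ⟨t.2, by simp [e]⟩
        ⟨t'.2, by simp only [e, hsum, add_sub_cancel_left, c'.2]⟩
      have hcc' : (c : M) = c' := by rwa [htt', add_right_inj] at hsum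
      simp [Subtype.ext htt', Subtype.ext hcc']
    · rintro ⟨y, hy⟩
      obtain ⟨t, ⟨htT, hyt⟩, -⟩ := hT y hy
      exact ⟨(⟨t, htT⟩, ⟨y - t, hyt⟩), Subtype.ext (add_sub_cancel _ _)⟩
  rw [← (Equiv.ofBijective e he).sum_comp, Fintype.sum_prod_type]
  exact Finset.sum_coe_sort T fun t => ∑ c : H, f (t + c)

section CosetState

variable {n : ℕ} {C : Submodule (ZMod 2) (Fin n → ZMod 2)}

lemma cosetState_apply (x z w : Fin n → ZMod 2) :
    cosetState n C x z w = (((√(Fintype.card C : ℝ))⁻¹ : ℝ) : ℂ) *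
      ∑ c : C, (sgn (z ⬝ᵥ (c : Fin n → ZMod 2)) : ℂ) * if w = x + c then 1 else 0 :=
  rfl

lemma cosetState_add_of_mem {c : Fin n → ZMod 2} (hc : c ∈ C) (x z : Fin n → ZMod 2) :
    cosetState n C (x + c) z = fun w => (sgn (z ⬝ᵥ c) : ℂ) * cosetState n C x z w := by
  funext w
  rw [cosetState_apply, cosetState_apply, mul_left_comm (sgn _ : ℂ)]
  congr 1
  rw [Finset.mul_sum]
  apply Fintype.sum_equiv (Equiv.addRight (⟨c, hc⟩ : C))
  intro x'
  simp only [Equiv.coe_addRight, Submodule.coe_add, dotProduct_add, sgn_add,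
    show x + (x' + c) = x + c + x' by abel]
  push_cast
  linear_combination -(sgn (z ⬝ᵥ x') * if w = x + c + x' then (1 : ℂ) else 0) *
    ofReal_sgn_mul_self (z ⬝ᵥ c)

lemma sgn_mul_cosetState_eq_of_sub_mem {C₂ : Submodule (ZMod 2) (Fin n → ZMod 2)}
    {z₁ : Fin n → ZMod 2} (hz₁ : ∀ c ∈ C₂, z₁ ⬝ᵥ c = 0) (x z₂ : Fin n → ZMod 2)
    {x₁ x₁' : Fin n → ZMod 2} (h : x₁ - x₁' ∈ C₂) :
    (fun w => (sgn ((z₁ + z₂) ⬝ᵥ x₁) : ℂ) * cosetState n C₂ (x + x₁) z₂ w) =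
      fun w => (sgn ((z₁ + z₂) ⬝ᵥ x₁') : ℂ) * cosetState n C₂ (x + x₁') z₂ w := by
  obtain ⟨c, hc, rfl⟩ : ∃ c ∈ C₂, x₁ = x₁' + c := ⟨x₁ - x₁', h, by abel⟩
  rw [← add_assoc, cosetState_add_of_mem hc, sgn_add_dotProduct_add (hz₁ c hc)]
  funext w
  push_cast
  linear_combination (sgn ((z₁ + z₂) ⬝ᵥ x₁') * cosetState n C₂ (x + x₁') z₂ w : ℂ) *
    ofReal_sgn_mul_self (z₂ ⬝ᵥ c)

lemma cosetState_eq_sum_transversal {C₂ C₁ : Submodule (ZMod 2) (Fin n → ZMod 2)}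
    (h₂₁ : C₂ ≤ C₁) {z₁ : Fin n → ZMod 2} (hz₁ : ∀ c ∈ C₂, z₁ ⬝ᵥ c = 0)
    {R : Finset (Fin n → ZMod 2)} (hRC₁ : ∀ x₁ ∈ R, x₁ ∈ C₁)
    (hR : ∀ y ∈ C₁, ∃! x₁, x₁ ∈ R ∧ y - x₁ ∈ C₂) (x z₂ : Fin n → ZMod 2) :
    cosetState n C₁ x (z₁ + z₂) = fun w =>
      (((√((Fintype.card C₁ : ℝ) / Fintype.card C₂))⁻¹ : ℝ) : ℂ) *
        ∑ x₁ ∈ R, (sgn ((z₁ + z₂) ⬝ᵥ x₁) : ℂ) * cosetState n C₂ (x + x₁) z₂ w := by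
  funext w
  rw [cosetState_apply, Submodule.sum_eq_sum_transversal_sum h₂₁ hRC₁ hR
      (fun y => (sgn ((z₁ + z₂) ⬝ᵥ y) : ℂ) * if w = x + y then 1 else 0),
    ← inv_sqrt_div_mul_inv_sqrt _ (Nat.cast_pos.2 (Fintype.card_pos (α := C₂))), Complex.ofReal_mul,
    mul_assoc, Finset.mul_sum R]
  congr 1
  refine Finset.sum_congr rfl fun x₁ _ => ?_
  rw [cosetState_apply, mul_left_comm (sgn _ : ℂ)]
  congr 1
  rw [Finset.mul_sum]
  refine Finset.sum_congr rfl fun c _ => ?_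
  rw [sgn_add_dotProduct_add (hz₁ c c.2), add_assoc]
  push_cast
  ring

end CosetState

/-- For `C2 ⊆ C1`, `z1 ∈ C2^⊥`, and a transversal `R ⊆ C1` of the cosets
of `C2` in `C1`:
`|x,z1+z2⟩_{C1} = |C1/C2|^{−1/2}·Σ_{x1∈R} (−1)^{(z1+z2)·x1}·|x+x1,z2⟩_{C2}`, and each
summand depends only on the coset `x1 + C2`. -/
theorem stmt_7 (n : ℕ) (C2 C1 : Submodule (ZMod 2) (Fin n → ZMod 2)) (h21 : C2 ≤ C1)
    (x z1 z2 : Fin n → ZMod 2)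
    (hz1 : ∀ c ∈ C2, (∑ i, z1 i * c i) = (0 : ZMod 2))
    (R : Finset (Fin n → ZMod 2)) (hRsub : ∀ x1 ∈ R, x1 ∈ C1)
    (hR : ∀ y ∈ C1, ∃! x1, x1 ∈ R ∧ y - x1 ∈ C2) :
    (cosetState n C1 x (z1 + z2)
      = fun w => (((Real.sqrt ((Fintype.card C1 : ℝ) / (Fintype.card C2 : ℝ)))⁻¹ : ℝ) : ℂ) *
          ∑ x1 ∈ R, ((sgn (∑ i, (z1 + z2) i * x1 i) : ℝ) : ℂ) *
            cosetState n C2 (x + x1) z2 w)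
    ∧ ∀ x1 x1' : Fin n → ZMod 2, x1 - x1' ∈ C2 →
        (fun w => ((sgn (∑ i, (z1 + z2) i * x1 i) : ℝ) : ℂ) *
            cosetState n C2 (x + x1) z2 w)
          = fun w => ((sgn (∑ i, (z1 + z2) i * x1' i) : ℝ) : ℂ) *
            cosetState n C2 (x + x1') z2 w :=
  ⟨cosetState_eq_sum_transversal h21 hz1 hRsub hR x z2,
    fun _ _ h => sgn_mul_cosetState_eq_of_sub_mem hz1 x z2 h⟩
end

section
/- Let n, l ≥ 1 be integers, let k_low, k_up be integers with 0 ≤ k_low ≤ k_up ≤ l, and let δ : {0,…,l} → [0,∞) satisfy k/l + δ(k) ≤ 1 for all k. Define f(k',k|n,l,δ) := min{2^{n·(h(k'/n) − h(k/l + δ))}, 1} if 0 ≤ k' < n/2, f(k',k|n,l,δ) := 1 if k' ≥ n/2, and (as a convention) f(k',k|n,l,δ) := 1 if k' < 0. Then max_{0 ≤ j ≤ n+l} [ Σ_{k=0}^{k_low} P_hg(k|n,l,j)·f(j−k_low, k_low|n,l,δ(k_low)) + Σ_{k=k_low+1}^{k_up} P_hg(k|n,l,j)·f(j−k, k|n,l,δ(k))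 ] ≥ (1/((n+1)(l+1)))·2^{M}, where M := max over integer pairs (j,k) with k_low ≤ k ≤ k_up and k ≤ j ≤ k+n of [ l·h(k/l) + n·h((j−k)/n) − (n+l)·h(j/(n+l)) − n·[h(k/l + δ(k)) − h((j−k)/n)]_+ ], and [t]_+ := max{t, 0}. -/
/-- The hypergeometric probability `P_hg(k|n,l,j) = C(l,k)·C(n,j−k)/C(n+l,j)`
(with the convention that a binomial coefficient with negative lower index is `0`). -/
noncomputable def Phg (n l j k : ℕ) : ℝ :=
  if k ≤ j then ((l.choose k * n.choose (j - k) : ℕ) : ℝ) / ((n + l).choose j : ℝ) else 0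

/-- `f(k',k|n,l,δ)`: equal to `min{2^{n·(h(k'/n) − h(k/l + δ))}, 1}` if `0 ≤ k' < n/2`,
to `1` if `k' ≥ n/2`, and (by convention) to `1` if `k' < 0`. -/
noncomputable def f16 (n l : ℕ) (k' : ℤ) (k : ℕ) (δ : ℝ) : ℝ :=
  if k' < 0 then 1
  else if (k' : ℝ) < (n : ℝ) / 2 then
    min ((2 : ℝ) ^ ((n : ℝ) * (h2 ((k' : ℝ) / n) - h2 ((k : ℝ) / l + δ)))) 1
  else 1

-- auxiliary lemmas
lemma T_step_up (m r i : ℕ) (hi : i < r) (hr : r ≤ m) :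
    m.choose i * r^i * (m-r)^(m-i) ≤ m.choose (i+1) * r^(i+1) * (m-r)^(m-(i+1)) := by
  rcases eq_or_lt_of_le hr with h | h
  · subst h
    have h0 : r - i ≠ 0 := by omega
    simp [Nat.sub_self, zero_pow h0]
  · have hs : 0 < m - r := by omega
    apply Nat.le_of_mul_le_mul_right _ (Nat.mul_pos (Nat.succ_pos i) hs)
    have key : (i+1)*(m-r) ≤ (m-i)*r :=
      le_of_le_of_eq (Nat.mul_le_mul (show i+1 ≤ r by omega) (show m-r ≤ m-i by omega))
        (mul_comm _ _)
    have hmi : m - i = (m - (i+1)) + 1 := by omega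
    calc m.choose i * r^i * (m-r)^(m-i) * ((i+1)*(m-r))
        ≤ m.choose i * r^i * (m-r)^(m-i) * ((m-i)*r) :=
          Nat.mul_le_mul_left _ key
      _ = (m.choose i * (m - i)) * r^(i+1) * (m-r)^(m-i) := by ring
      _ = (m.choose (i+1) * (i+1)) * r^(i+1) * (m-r)^(m-i) := by
          rw [Nat.choose_succ_right_eq]
      _ = m.choose (i+1) * r^(i+1) * (m-r)^(m-(i+1)) * ((i+1)*(m-r)) := by
          rw [hmi, pow_succ]; ring

lemma T_step_down (m r i : ℕ) (hi : r ≤ i) (him : i < m) :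
    m.choose (i+1) * r^(i+1) * (m-r)^(m-(i+1)) ≤ m.choose i * r^i * (m-r)^(m-i) := by
  apply Nat.le_of_mul_le_mul_right _ (Nat.succ_pos i)
  have key : (m-i)*r ≤ (i+1)*(m-r) :=
    le_of_le_of_eq (Nat.mul_le_mul (show m-i ≤ m-r by omega) (show r ≤ i+1 by omega))
      (mul_comm _ _)
  have hmi : m - i = (m - (i+1)) + 1 := by omega
  calc m.choose (i+1) * r^(i+1) * (m-r)^(m-(i+1)) * (i+1)
      = (m.choose (i+1) * (i+1)) * r^(i+1) * (m-r)^(m-(i+1)) := by ring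
    _ = (m.choose i * (m - i)) * r^(i+1) * (m-r)^(m-(i+1)) := by
        rw [Nat.choose_succ_right_eq]
    _ = (m.choose i * r^i * (m-r)^(m-(i+1))) * ((m-i)*r) := by ring
    _ ≤ (m.choose i * r^i * (m-r)^(m-(i+1))) * ((i+1)*(m-r)) := Nat.mul_le_mul_left _ key
    _ = m.choose i * r^i * (m-r)^(m-i) * (i+1) := by rw [hmi, pow_succ]; ring

lemma T_le_T_r (m r : ℕ) (hr : r ≤ m) :
    ∀ i ≤ m, m.choose i * r^i * (m-r)^(m-i) ≤ m.choose r * r^r * (m-r)^(m-r) := by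
  have up : ∀ d i, i + d ≤ r → m.choose i * r^i * (m-r)^(m-i) ≤
      m.choose (i+d) * r^(i+d) * (m-r)^(m-(i+d)) := by
    intro d
    induction d with
    | zero => intro i _; simp
    | succ d ih =>
      intro i hid
      have he : i + 1 + d = i + (d+1) := by omega
      calc m.choose i * r^i * (m-r)^(m-i)
          ≤ m.choose (i+1) * r^(i+1) * (m-r)^(m-(i+1)) :=
            T_step_up m r i (by omega) hr
        _ ≤ m.choose (i+1+d) * r^(i+1+d) * (m-r)^(m-(i+1+d)) := ih (i+1) (by omega)
        _ = m.choose (i+(d+1)) * r^(i+(d+1)) * (m-r)^(m-(i+(d+1))) := by rw [he]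
  have down : ∀ d, r + d ≤ m → m.choose (r+d) * r^(r+d) * (m-r)^(m-(r+d)) ≤
      m.choose r * r^r * (m-r)^(m-r) := by
    intro d
    induction d with
    | zero => intro _; simp
    | succ d ih =>
      intro hd
      have he : r + (d+1) = (r+d) + 1 := by omega
      rw [he]
      calc m.choose ((r+d)+1) * r^((r+d)+1) * (m-r)^(m-((r+d)+1))
          ≤ m.choose (r+d) * r^(r+d) * (m-r)^(m-(r+d)) :=
            T_step_down m r (r+d) (by omega) (by omega)
        _ ≤ m.choose r * r^r * (m-r)^(m-r) := ih (by omega)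
  intro i him
  rcases le_or_gt i r with h | h
  · have := up (r - i) i (by omega)
    rwa [Nat.add_sub_cancel' h] at this
  · have := down (i - r) (by omega)
    rwa [Nat.add_sub_cancel' (le_of_lt h)] at this

lemma sum_T (m r : ℕ) (hr : r ≤ m) :
    ∑ i ∈ Finset.range (m+1), m.choose i * r^i * (m-r)^(m-i) = m^m := by
  calc ∑ i ∈ Finset.range (m+1), m.choose i * r^i * (m-r)^(m-i)
      = ∑ i ∈ Finset.range (m+1), r^i * (m-r)^(m-i) * m.choose i :=
        Finset.sum_congr rfl (fun i _ => by ring)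
    _ = (r + (m-r))^m := (add_pow r (m-r) m).symm
    _ = m^m := by rw [Nat.add_sub_cancel' hr]

lemma nat_L1 (m r : ℕ) (hr : r ≤ m) :
    m.choose r * r^r * (m-r)^(m-r) ≤ m^m := by
  rw [← sum_T m r hr]
  exact Finset.single_le_sum (f := fun i => m.choose i * r^i * (m-r)^(m-i)) (fun i _ => Nat.zero_le _) (show r ∈ Finset.range (m+1) from Finset.mem_range.mpr (Nat.lt_succ_of_le hr))

lemma nat_L2 (m r : ℕ) (hr : r ≤ m) :
    m^m ≤ (m+1) * (m.choose r * r^r * (m-r)^(m-r)) := by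
  rw [← sum_T m r hr]
  have := Finset.sum_le_card_nsmul (Finset.range (m+1))
    (fun i => m.choose i * r^i * (m-r)^(m-i)) (m.choose r * r^r * (m-r)^(m-r))
    (fun i hi => T_le_T_r m r hr i (Nat.lt_succ_iff.mp (Finset.mem_range.mp hi)))
  simpa [smul_eq_mul] using this


lemma h2_zero : h2 0 = 0 := by simp [h2]

lemma h2_one : h2 1 = 0 := by simp [h2]

lemma rpow_h2_eq (m r : ℕ) (h0 : 0 < r) (h1 : r < m) :
    (2:ℝ) ^ ((m:ℝ) * h2 ((r:ℝ)/(m:ℝ))) =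
      (m:ℝ)^m / ((r:ℝ)^r * ((m-r:ℕ):ℝ)^(m-r)) := by
  have hm : (0:ℝ) < m := by exact_mod_cast h0.trans h1
  have hr : (0:ℝ) < r := by exact_mod_cast h0
  have hsn : 0 < m - r := by omega
  have hs : (0:ℝ) < ((m-r:ℕ):ℝ) := by exact_mod_cast hsn
  have hp1 : 1 - (r:ℝ)/m = ((m-r:ℕ):ℝ)/m := by
    rw [Nat.cast_sub h1.le]; field_simp
  have e1 : (m:ℝ) * h2 ((r:ℝ)/m) =
      (-(r:ℝ)) * Real.logb 2 ((r:ℝ)/m) + (-(((m-r:ℕ):ℝ))) * Real.logb 2 (((m-r:ℕ):ℝ)/m) := by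
    rw [h2, hp1, Nat.cast_sub h1.le]
    field_simp
    ring
  have key : ∀ (x : ℝ) (k : ℕ), 0 < x →
      (2:ℝ) ^ ((-(k:ℝ)) * Real.logb 2 x) = (x^k)⁻¹ := by
    intro x k hx
    rw [mul_comm, Real.rpow_mul (by norm_num : (0:ℝ) ≤ 2), Real.rpow_logb two_pos (by norm_num) hx,
      Real.rpow_neg hx.le, Real.rpow_natCast]
  rw [e1, Real.rpow_add two_pos, key _ r (by positivity), key _ (m-r) (by positivity)]
  rw [div_pow, div_pow]
  rw [show (m:ℝ)^m = (m:ℝ)^r * (m:ℝ)^(m-r) by rw [← pow_add, Nat.add_sub_cancel' h1.le]]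
  field_simp

lemma choose_le_rpow (m r : ℕ) (hr : r ≤ m) :
    (m.choose r : ℝ) ≤ (2:ℝ) ^ ((m:ℝ) * h2 ((r:ℝ)/(m:ℝ))) := by
  rcases Nat.eq_zero_or_pos r with h0 | h0
  · subst h0
    simp [h2_zero]
  rcases eq_or_lt_of_le hr with h1 | h1
  · subst h1
    have hm : (0:ℝ) < r := by exact_mod_cast h0
    rw [div_self hm.ne', h2_one]
    simp
  · have hs : (0:ℝ) < ((m-r:ℕ):ℝ) := by exact_mod_cast (show 0 < m - r by omega)
    have hrr : (0:ℝ) < (r:ℝ) := by exact_mod_cast h0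
    rw [rpow_h2_eq m r h0 h1, le_div_iff₀ (by positivity)]
    have := nat_L1 m r hr
    calc (m.choose r : ℝ) * ((r:ℝ)^r * ((m-r:ℕ):ℝ)^(m-r))
        = ((m.choose r * r^r * (m-r)^(m-r) : ℕ) : ℝ) := by push_cast; ring
      _ ≤ ((m^m : ℕ) : ℝ) := by exact_mod_cast this
      _ = (m:ℝ)^m := by push_cast; ring

lemma rpow_le_choose (m r : ℕ) (hr : r ≤ m) :
    (2:ℝ) ^ ((m:ℝ) * h2 ((r:ℝ)/(m:ℝ))) ≤ ((m:ℝ) + 1) * (m.choose r : ℝ) := by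
  rcases Nat.eq_zero_or_pos r with h0 | h0
  · subst h0
    simp [h2_zero]
  rcases eq_or_lt_of_le hr with h1 | h1
  · subst h1
    have hm : (0:ℝ) < r := by exact_mod_cast h0
    rw [div_self hm.ne', h2_one]
    simp
  · have hs : (0:ℝ) < ((m-r:ℕ):ℝ) := by exact_mod_cast (show 0 < m - r by omega)
    have hrr : (0:ℝ) < (r:ℝ) := by exact_mod_cast h0
    rw [rpow_h2_eq m r h0 h1, div_le_iff₀ (by positivity)]
    have := nat_L2 m r hr
    calc (m:ℝ)^m = ((m^m : ℕ) : ℝ) := by push_cast; ring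
      _ ≤ (((m+1) * (m.choose r * r^r * (m-r)^(m-r)) : ℕ) : ℝ) := by exact_mod_cast this
      _ = ((m:ℝ)+1) * (m.choose r : ℝ) * ((r:ℝ)^r * ((m-r:ℕ):ℝ)^(m-r)) := by push_cast; ring



lemma Phg_nonneg (n l j k : ℕ) : 0 ≤ Phg n l j k := by
  unfold Phg; split_ifs <;> positivity

lemma f16_nonneg (n l : ℕ) (k' : ℤ) (k : ℕ) (δ : ℝ) : 0 ≤ f16 n l k' k δ := by
  unfold f16
  split_ifs <;> first
    | exact zero_le_one
    | exact le_min (by positivity) zero_le_one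

lemma f16_ge (n l : ℕ) (k' : ℤ) (k : ℕ) (δ : ℝ) :
    (2:ℝ) ^ (-((n:ℝ) * max (h2 ((k:ℝ)/l + δ) - h2 (((k':ℤ):ℝ)/n)) 0)) ≤ f16 n l k' k δ := by
  set a : ℝ := (n:ℝ) * (h2 (((k':ℤ):ℝ)/n) - h2 ((k:ℝ)/l + δ)) with ha
  have hexp : -((n:ℝ) * max (h2 ((k:ℝ)/l + δ) - h2 (((k':ℤ):ℝ)/n)) 0) = min a 0 := by
    have hn0 : (0:ℝ) ≤ n := Nat.cast_nonneg n
    rw [mul_max_of_nonneg _ _ hn0]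
    rw [← min_neg_neg]
    simp [ha]
    ring_nf
  rw [hexp]
  have hle1 : (2:ℝ) ^ (min a 0) ≤ 1 :=
    Real.rpow_le_one_of_one_le_of_nonpos one_le_two (min_le_right _ _)
  unfold f16
  split_ifs with h1 h2'
  · exact hle1
  · exact le_min (Real.rpow_le_rpow_of_exponent_le one_le_two (min_le_left _ _)) hle1
  · exact hle1

lemma Phg_ge (n l k j : ℕ) (hkl : k ≤ l) (hkj : k ≤ j) (hjn : j ≤ k + n) :
    (1 / (((n:ℝ)+1) * ((l:ℝ)+1))) *
      (2:ℝ) ^ ((l:ℝ) * h2 ((k:ℝ)/l) + (n:ℝ) * h2 (((j:ℝ)-(k:ℝ))/n)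
        - ((n:ℝ)+(l:ℝ)) * h2 ((j:ℝ)/((n:ℝ)+(l:ℝ)))) ≤ Phg n l j k := by
  have hc1 : (2:ℝ)^((l:ℝ) * h2 ((k:ℝ)/l)) ≤ ((l:ℝ)+1) * (l.choose k : ℝ) :=
    rpow_le_choose l k hkl
  have hc2 : (2:ℝ)^((n:ℝ) * h2 (((j:ℝ)-(k:ℝ))/n)) ≤ ((n:ℝ)+1) * (n.choose (j-k) : ℝ) := by
    have := rpow_le_choose n (j-k) (by omega)
    rwa [Nat.cast_sub hkj] at this
  have hc3 : (((n+l).choose j : ℕ) : ℝ) ≤ (2:ℝ)^(((n:ℝ)+(l:ℝ)) * h2 ((j:ℝ)/((n:ℝ)+(l:ℝ)))) := by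
    have := choose_le_rpow (n+l) j (by omega)
    rwa [Nat.cast_add] at this
  have hD : (0:ℝ) < (((n+l).choose j : ℕ) : ℝ) := by
    exact_mod_cast Nat.choose_pos (show j ≤ n + l by omega)
  rw [Phg, if_pos hkj]
  rw [show (l:ℝ) * h2 ((k:ℝ)/l) + (n:ℝ) * h2 (((j:ℝ)-(k:ℝ))/n)
        - ((n:ℝ)+(l:ℝ)) * h2 ((j:ℝ)/((n:ℝ)+(l:ℝ)))
      = (l:ℝ) * h2 ((k:ℝ)/l) + (n:ℝ) * h2 (((j:ℝ)-(k:ℝ))/n)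
        - ((n:ℝ)+(l:ℝ)) * h2 ((j:ℝ)/((n:ℝ)+(l:ℝ))) from rfl,
    Real.rpow_sub two_pos, Real.rpow_add two_pos]
  have heq : (1 / (((n:ℝ)+1) * ((l:ℝ)+1))) *
      ((2:ℝ)^((l:ℝ) * h2 ((k:ℝ)/l)) * (2:ℝ)^((n:ℝ) * h2 (((j:ℝ)-(k:ℝ))/n))
        / (2:ℝ)^(((n:ℝ)+(l:ℝ)) * h2 ((j:ℝ)/((n:ℝ)+(l:ℝ))))) =
      ((2:ℝ)^((l:ℝ) * h2 ((k:ℝ)/l)) / ((l:ℝ)+1) *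
        ((2:ℝ)^((n:ℝ) * h2 (((j:ℝ)-(k:ℝ))/n)) / ((n:ℝ)+1)))
        / (2:ℝ)^(((n:ℝ)+(l:ℝ)) * h2 ((j:ℝ)/((n:ℝ)+(l:ℝ)))) := by
    have hn1 : ((n:ℝ)+1) ≠ 0 := by positivity
    have hl1 : ((l:ℝ)+1) ≠ 0 := by positivity
    have hE : (2:ℝ)^(((n:ℝ)+(l:ℝ)) * h2 ((j:ℝ)/((n:ℝ)+(l:ℝ)))) ≠ 0 := by positivity
    field_simp
  rw [heq]
  apply div_le_div₀ (by positivity) ?_ (by positivity) hc3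
  push_cast
  have e1 : (2:ℝ)^((l:ℝ) * h2 ((k:ℝ)/l)) / ((l:ℝ)+1) ≤ (l.choose k : ℝ) := by
    rw [div_le_iff₀ (by positivity)]
    linarith [hc1]
  have e2 : (2:ℝ)^((n:ℝ) * h2 (((j:ℝ)-(k:ℝ))/n)) / ((n:ℝ)+1) ≤ (n.choose (j-k) : ℝ) := by
    rw [div_le_iff₀ (by positivity)]
    linarith [hc2]
  exact mul_le_mul e1 e2 (by positivity) (Nat.cast_nonneg _)

lemma Phg_f16_ge (n l k j : ℕ) (hkl : k ≤ l) (hkj : k ≤ j) (hjn : j ≤ k + n) (δk : ℝ) :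
    (1 / (((n:ℝ)+1) * ((l:ℝ)+1))) *
      (2:ℝ) ^ ((l:ℝ) * h2 ((k:ℝ)/l) + (n:ℝ) * h2 (((j:ℝ)-(k:ℝ))/n)
        - ((n:ℝ)+(l:ℝ)) * h2 ((j:ℝ)/((n:ℝ)+(l:ℝ)))
        - (n:ℝ) * max (h2 ((k:ℝ)/l + δk) - h2 (((j:ℝ)-(k:ℝ))/n)) 0)
      ≤ Phg n l j k * f16 n l ((j:ℤ) - (k:ℤ)) k δk := by
  have hcast : ((((j:ℤ) - (k:ℤ)) : ℤ) : ℝ) = (j:ℝ) - (k:ℝ) := by push_cast; ring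
  have hf := f16_ge n l ((j:ℤ) - (k:ℤ)) k δk
  rw [hcast] at hf
  have hP := Phg_ge n l k j hkl hkj hjn
  rw [sub_eq_add_neg ((l:ℝ) * h2 ((k:ℝ)/l) + (n:ℝ) * h2 (((j:ℝ)-(k:ℝ))/n)
        - ((n:ℝ)+(l:ℝ)) * h2 ((j:ℝ)/((n:ℝ)+(l:ℝ)))), Real.rpow_add two_pos, ← mul_assoc]
  exact mul_le_mul hP hf (by positivity) (Phg_nonneg n l j k)

/-- Lower bound for the key quantity of the large-deviation evaluation:
the maximum over `0 ≤ j ≤ n+l` of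
`Σ_{k=0}^{k_low} P_hg(k|n,l,j)·f(j−k_low,k_low|n,l,δ(k_low))
  + Σ_{k=k_low+1}^{k_up} P_hg(k|n,l,j)·f(j−k,k|n,l,δ(k))`
is at least `(1/((n+1)(l+1)))·2^M`, where `M` is the maximum over pairs `(k,j)` with
`k_low ≤ k ≤ k_up` and `k ≤ j ≤ k+n` of
`l·h(k/l) + n·h((j−k)/n) − (n+l)·h(j/(n+l)) − n·[h(k/l+δ(k)) − h((j−k)/n)]₊`. -/
theorem stmt_16 (n l : ℕ) (hn : 1 ≤ n) (hl : 1 ≤ l)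
    (klow kup : ℕ) (hlowup : klow ≤ kup) (hupl : kup ≤ l)
    (δ : ℕ → ℝ) (hδ0 : ∀ k ≤ l, 0 ≤ δ k) (hδ1 : ∀ k ≤ l, (k : ℝ) / l + δ k ≤ 1) :
    (Finset.range (n + l + 1)).sup'
        ⟨0, Finset.mem_range.mpr (Nat.succ_pos _)⟩
        (fun j =>
          ∑ k ∈ Finset.range (klow + 1),
              Phg n l j k * f16 n l ((j : ℤ) - (klow : ℤ)) klow (δ klow)
            + ∑ k ∈ Finset.Icc (klow + 1) kup,
                Phg n l j k * f16 n l ((j : ℤ) - (k : ℤ)) k (δ k))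
      ≥ (1 / (((n : ℝ) + 1) * ((l : ℝ) + 1))) *
          2 ^ (((Finset.Icc klow kup ×ˢ Finset.range (n + l + 1)).filter
                  (fun p : ℕ × ℕ => p.1 ≤ p.2 ∧ p.2 ≤ p.1 + n)).sup'
                ⟨(klow, klow), by
                  simp only [Finset.mem_filter, Finset.mem_product, Finset.mem_Icc,
                    Finset.mem_range]
                  omega⟩
                (fun p =>
                  (l : ℝ) * h2 ((p.1 : ℝ) / l) + (n : ℝ) * h2 (((p.2 : ℝ) - p.1) / n)
                    - ((n : ℝ) + l) * h2 ((p.2 : ℝ) / ((n : ℝ) + l))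
                    - (n : ℝ) *
                        max (h2 ((p.1 : ℝ) / l + δ p.1) - h2 (((p.2 : ℝ) - p.1) / n)) 0)) := by
  
  rw [ge_iff_le]
  obtain ⟨p, hpmem, hpeq⟩ := Finset.exists_mem_eq_sup'
    (⟨(klow, klow), by
      simp only [Finset.mem_filter, Finset.mem_product, Finset.mem_Icc, Finset.mem_range]
      omega⟩ : ((Finset.Icc klow kup ×ˢ Finset.range (n + l + 1)).filter
        (fun p : ℕ × ℕ => p.1 ≤ p.2 ∧ p.2 ≤ p.1 + n)).Nonempty)
    (fun p : ℕ × ℕ =>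
      (l : ℝ) * h2 ((p.1 : ℝ) / l) + (n : ℝ) * h2 (((p.2 : ℝ) - p.1) / n)
        - ((n : ℝ) + l) * h2 ((p.2 : ℝ) / ((n : ℝ) + l))
        - (n : ℝ) * max (h2 ((p.1 : ℝ) / l + δ p.1) - h2 (((p.2 : ℝ) - p.1) / n)) 0)
  rw [hpeq]
  obtain ⟨k, j⟩ := p
  simp only [Finset.mem_filter, Finset.mem_product, Finset.mem_Icc, Finset.mem_range] at hpmem
  obtain ⟨⟨⟨hk1, hk2⟩, hj1⟩, hkj, hjkn⟩ := hpmem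
  have hkl : k ≤ l := hk2.trans hupl
  have main := Phg_f16_ge n l k j hkl hkj hjkn (δ k)
  refine le_trans (le_of_eq (by norm_num)) (le_trans main ?_)
  have hterm :
      Phg n l j k * f16 n l ((j : ℤ) - (k : ℤ)) k (δ k) ≤
        ∑ k' ∈ Finset.range (klow + 1),
            Phg n l j k' * f16 n l ((j : ℤ) - (klow : ℤ)) klow (δ klow)
          + ∑ k' ∈ Finset.Icc (klow + 1) kup,
              Phg n l j k' * f16 n l ((j : ℤ) - (k' : ℤ)) k' (δ k') := by
    rcases eq_or_lt_of_le hk1 with hke | hke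
    · subst hke
      have h1 : Phg n l j klow * f16 n l ((j : ℤ) - (klow : ℤ)) klow (δ klow) ≤
          ∑ k' ∈ Finset.range (klow + 1),
            Phg n l j k' * f16 n l ((j : ℤ) - (klow : ℤ)) klow (δ klow) :=
        Finset.single_le_sum
          (f := fun k' => Phg n l j k' * f16 n l ((j : ℤ) - (klow : ℤ)) klow (δ klow))
          (fun i _ => mul_nonneg (Phg_nonneg n l j i) (f16_nonneg n l _ _ _))
          (Finset.mem_range.mpr (Nat.lt_succ_self klow))
      exact h1.trans (le_add_of_nonneg_right (Finset.sum_nonneg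
        (fun i _ => mul_nonneg (Phg_nonneg n l j i) (f16_nonneg n l _ _ _))))
    · have h1 : Phg n l j k * f16 n l ((j : ℤ) - (k : ℤ)) k (δ k) ≤
          ∑ k' ∈ Finset.Icc (klow + 1) kup,
            Phg n l j k' * f16 n l ((j : ℤ) - (k' : ℤ)) k' (δ k') :=
        Finset.single_le_sum
          (f := fun k' => Phg n l j k' * f16 n l ((j : ℤ) - (k' : ℤ)) k' (δ k'))
          (fun i _ => mul_nonneg (Phg_nonneg n l j i) (f16_nonneg n l _ _ _))
          (Finset.mem_Icc.mpr ⟨hke, hk2⟩)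
      exact h1.trans (le_add_of_nonneg_left (Finset.sum_nonneg
        (fun i _ => mul_nonneg (Phg_nonneg n l j i) (f16_nonneg n l _ _ _))))
  exact hterm.trans (Finset.le_sup'
    (f := fun j =>
      ∑ k ∈ Finset.range (klow + 1),
          Phg n l j k * f16 n l ((j : ℤ) - (klow : ℤ)) klow (δ klow)
        + ∑ k ∈ Finset.Icc (klow + 1) kup,
            Phg n l j k * f16 n l ((j : ℤ) - (k : ℤ)) k (δ k))
    (Finset.mem_range.mpr hj1))
end

section
/- For every p ∈ (0,1), every real ε with p + ε ∈ (0,1), and every r ∈ (0,1]: (ln 2 / r)·( h(p + r·ε) − (1−r)·h(p) − r·h(p + ε) ) ≥ (1−r)·ε². -/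
/-!
The second derivative of the natural-log binary entropy `H` is `-1 / (x (1 - x)) ≤ -4`, so `H` is
`4`-strongly concave on `[0, 1]`. Applied at `p` and `p + ε` with weights `1 - r` and `r`, this
bounds the concavity gap `H(p + rε) - (1 - r) H(p) - r H(p + ε)` below by `2 r (1 - r) ε²`;
dividing by `r` and converting to base 2 gives twice the claimed bound.
-/

open Real Set

lemma h2_eq_binEntropy_div_log_two (x : ℝ) : h2 x = binEntropy x / log 2 := by
  simp only [h2, binEntropy, logb, log_inv]
  ring

lemma strongConcaveOn_of_hasDerivWithinAt2_le {D : Set ℝ} (hD : Convex ℝ D) {f f' f'' : ℝ → ℝ}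
    {m : ℝ} (hf : ContinuousOn f D)
    (hf' : ∀ x ∈ interior D, HasDerivWithinAt f (f' x) (interior D) x)
    (hf'' : ∀ x ∈ interior D, HasDerivWithinAt f' (f'' x) (interior D) x)
    (hf''_le : ∀ x ∈ interior D, f'' x ≤ -m) : StrongConcaveOn D m f := by
  rw [strongConcaveOn_iff_convex]
  simp only [norm_eq_abs, sq_abs]
  refine concaveOn_of_hasDerivWithinAt2_nonpos hD (f' := fun x ↦ f' x + m * x)
    (f'' := fun x ↦ f'' x + m) (hf.add (by fun_prop)) (fun x hx ↦ ?_) (fun x hx ↦ ?_)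
    (fun x hx ↦ by linarith [hf''_le x hx])
  · have hsq := ((hasDerivAt_pow 2 x).const_mul (m / 2)).hasDerivWithinAt (s := interior D)
    exact ((hf' x hx).add hsq).congr_deriv (by ring)
  · exact ((hf'' x hx).add ((hasDerivAt_id x).const_mul m).hasDerivWithinAt).congr_deriv
      (by simp)

lemma hasDerivAt_log_one_sub_sub_log {x : ℝ} (hx₀ : x ≠ 0) (hx₁ : x ≠ 1) :
    HasDerivAt (fun y ↦ log (1 - y) - log y) (-1 / (x * (1 - x))) x := by
  have hx₁' : 1 - x ≠ 0 := sub_ne_zero.2 hx₁.symm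
  refine ((((hasDerivAt_id' x).const_sub 1).log hx₁').sub (hasDerivAt_log hx₀)).congr_deriv ?_
  field_simp
  ring

lemma strongConcaveOn_binEntropy : StrongConcaveOn (Icc 0 1) 4 binEntropy := by
  refine strongConcaveOn_of_hasDerivWithinAt2_le (f' := fun y ↦ log (1 - y) - log y)
    (f'' := fun x ↦ -1 / (x * (1 - x))) (convex_Icc 0 1) binEntropy_continuous.continuousOn
    (fun x hx ↦ ?_) (fun x hx ↦ ?_) (fun x hx ↦ ?_) <;>
    obtain ⟨hx₀, hx₁⟩ := interior_Icc (a := (0 : ℝ)) ▸ hx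
  · exact (hasDerivAt_binEntropy hx₀.ne' hx₁.ne).hasDerivWithinAt
  · exact (hasDerivAt_log_one_sub_sub_log hx₀.ne' hx₁.ne).hasDerivWithinAt
  · have hpos : 0 < x * (1 - x) := mul_pos hx₀ (sub_pos.2 hx₁)
    rw [div_le_iff₀ hpos]
    nlinarith [sq_nonneg (2 * x - 1)]

/-- For `p ∈ (0,1)`, `p + ε ∈ (0,1)` and `r ∈ (0,1]`:
`(ln 2 / r)·(h(p + rε) − (1−r)h(p) − r·h(p + ε)) ≥ (1−r)·ε²`. -/
theorem stmt_18 (p ε r : ℝ) (hp0 : 0 < p) (hp1 : p < 1)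
    (hpe0 : 0 < p + ε) (hpe1 : p + ε < 1) (hr0 : 0 < r) (hr1 : r ≤ 1) :
    (Real.log 2 / r) * (h2 (p + r * ε) - (1 - r) * h2 p - r * h2 (p + ε))
      ≥ (1 - r) * ε ^ 2 := by
  have gap := strongConcaveOn_binEntropy.2 (x := p) (y := p + ε) ⟨hp0.le, hp1.le⟩
    ⟨hpe0.le, hpe1.le⟩ (sub_nonneg.2 hr1) hr0.le (sub_add_cancel 1 r)
  have hmid : (1 - r) • p + r • (p + ε) = p + r * ε := by simp only [smul_eq_mul]; ring
  rw [hmid, smul_eq_mul, smul_eq_mul, norm_eq_abs] at gap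
  simp only [sq_abs, sub_add_cancel_left, neg_sq] at gap
  have hlog2 : log 2 ≠ 0 := (log_pos one_lt_two).ne'
  calc (1 - r) * ε ^ 2
      ≤ 2 * (1 - r) * ε ^ 2 := by nlinarith [sq_nonneg ε, sub_nonneg.2 hr1]
    _ ≤ (binEntropy (p + r * ε) - (1 - r) * binEntropy p - r * binEntropy (p + ε)) / r := by
      rw [le_div_iff₀ hr0]
      linarith
    _ = (log 2 / r) * (h2 (p + r * ε) - (1 - r) * h2 p - r * h2 (p + ε)) := by
      simp only [h2_eq_binEntropy_div_log_two]
      field_simp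
end

section
/- Let P be a probability distribution on F_2^n, defining the additive channel W(y|x) := P(y − x). Let C1 ⊆ C2 ⊆ F_2^n be linear subspaces and let Γ : F_2^n/C2 → F_2^n satisfy Γ([y]₂) ∈ [y]₂ for every coset [y]₂, where [·]₂ and [·]₁ denote cosets modulo C2 and modulo C1 respectively. Define the decoder D^Γ(y) := [y − Γ([y]₂)]₁ ∈ F_2^n/C1. Then the average decoding error probability (1/|C2/C1|)·Σ_{[x2]∈C2/C1} (1/|C1|)·Σ_{x1∈C1} Σ_{y : D^Γ(y) ≠ [x2]₁} P(y − (x2 + x1)) equals 1 − P(Γ + C1), where Γ + C1 := {Γ([y]₂) + c : y ∈ F_2^n, c ∈ C1}. -/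
open scoped Classical

/-- For an additive channel `W(y|x) = P(y−x)`, nested linear codes
`C1 ⊆ C2 ⊆ F_2^n`, and a decoder `D^Γ(y) = [y − Γ([y]₂)]₁` built from coset
representatives `Γ` for `C2`, the average decoding error probability equals
`1 − P(Γ + C1)`. -/
theorem stmt_19 (n : ℕ) (P : (Fin n → ZMod 2) → ℝ)
    (hP0 : ∀ x, 0 ≤ P x) (hP1 : ∑ x, P x = 1)
    (C1 C2 : Submodule (ZMod 2) (Fin n → ZMod 2)) (h12 : C1 ≤ C2)
    (Γ : (Fin n → ZMod 2) → (Fin n → ZMod 2))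
    (hΓmem : ∀ y, y - Γ y ∈ C2)
    (hΓcoset : ∀ y y', y - y' ∈ C2 → Γ y = Γ y')
    (T : Finset (Fin n → ZMod 2)) (hTsub : ∀ x2 ∈ T, x2 ∈ C2)
    (hT : ∀ x ∈ C2, ∃! x2, x2 ∈ T ∧ x - x2 ∈ C1) :
    (T.card : ℝ)⁻¹ * ∑ x2 ∈ T, (Fintype.card C1 : ℝ)⁻¹ *
        ∑ x1 : C1,
          ∑ y ∈ Finset.univ.filter
              (fun y : Fin n → ZMod 2 => (y - Γ y) - x2 ∉ C1),
            P (y - (x2 + (x1 : Fin n → ZMod 2)))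
      = 1 - ∑ w ∈ Finset.univ.filter
          (fun w : Fin n → ZMod 2 => ∃ y, ∃ c ∈ C1, w = Γ y + c), P w := by
  set E := ∑ z ∈ Finset.univ.filter (fun z : Fin n → ZMod 2 => z - Γ z ∉ C1), P z with hE
  have hc1 : (Fintype.card C1 : ℝ) ≠ 0 := by
    exact_mod_cast Fintype.card_ne_zero
  have hTne : T.Nonempty := by
    obtain ⟨x2, hx2, -⟩ := hT 0 (zero_mem C2)
    exact ⟨x2, hx2.1⟩
  have hTc : (T.card : ℝ) ≠ 0 := by
    exact_mod_cast Finset.card_ne_zero_of_mem hTne.choose_spec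
  have key : ∀ x2 ∈ T, ∀ x1 : C1,
      ∑ y ∈ Finset.univ.filter
          (fun y : Fin n → ZMod 2 => (y - Γ y) - x2 ∉ C1),
        P (y - (x2 + (x1 : Fin n → ZMod 2))) = E := by
    intro x2 hx2 x1
    refine Finset.sum_equiv (Equiv.subRight (x2 + (x1 : Fin n → ZMod 2))) ?_ ?_
    · intro y
      simp only [Finset.mem_filter, Finset.mem_univ, true_and, Equiv.subRight_apply]
      have hmemC2 : (y - (x2 + (x1 : Fin n → ZMod 2))) - y ∈ C2 := by
        have : (y - (x2 + (x1 : Fin n → ZMod 2))) - y = -(x2 + (x1 : Fin n → ZMod 2)) := by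
          abel
        rw [this]
        exact neg_mem (add_mem (hTsub x2 hx2) (h12 x1.2))
      have hΓeq : Γ (y - (x2 + (x1 : Fin n → ZMod 2))) = Γ y := hΓcoset _ _ hmemC2
      have hrw : (y - (x2 + (x1 : Fin n → ZMod 2))) - Γ (y - (x2 + (x1 : Fin n → ZMod 2)))
          = ((y - Γ y) - x2) - (x1 : Fin n → ZMod 2) := by
        rw [hΓeq]; abel
      rw [hrw, Submodule.sub_mem_iff_left C1 x1.2]
    · intro y hy
      simp
  have inner : ∀ x2 ∈ T, (Fintype.card C1 : ℝ)⁻¹ *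
      ∑ x1 : C1,
        ∑ y ∈ Finset.univ.filter
            (fun y : Fin n → ZMod 2 => (y - Γ y) - x2 ∉ C1),
          P (y - (x2 + (x1 : Fin n → ZMod 2))) = E := by
    intro x2 hx2
    rw [Finset.sum_congr rfl (fun x1 _ => key x2 hx2 x1)]
    simp [Finset.sum_const, mul_comm, inv_mul_cancel_left₀ hc1]
  have lhs : (T.card : ℝ)⁻¹ * ∑ x2 ∈ T, (Fintype.card C1 : ℝ)⁻¹ *
        ∑ x1 : C1,
          ∑ y ∈ Finset.univ.filter
              (fun y : Fin n → ZMod 2 => (y - Γ y) - x2 ∉ C1),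
            P (y - (x2 + (x1 : Fin n → ZMod 2))) = E := by
    rw [Finset.sum_congr rfl inner]
    rw [Finset.sum_const, nsmul_eq_mul, inv_mul_cancel_left₀ hTc]
  rw [lhs]
  -- now the RHS
  have hpred : ∀ w : Fin n → ZMod 2,
      (∃ y, ∃ c ∈ C1, w = Γ y + c) ↔ w - Γ w ∈ C1 := by
    intro w
    constructor
    · rintro ⟨y, c, hc, rfl⟩
      have hΓeq : Γ (Γ y + c) = Γ y := by
        apply hΓcoset
        have : (Γ y + c) - y = -(y - Γ y) + c := by abel
        rw [this]
        exact add_mem (neg_mem (hΓmem y)) (h12 hc)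
      rw [hΓeq]
      simpa using hc
    · intro h
      exact ⟨w, w - Γ w, h, by abel⟩
  have hsplit : ∑ w ∈ Finset.univ.filter
        (fun w : Fin n → ZMod 2 => ∃ y, ∃ c ∈ C1, w = Γ y + c), P w + E = 1 := by
    rw [hE]
    have : (Finset.univ.filter (fun z : Fin n → ZMod 2 => z - Γ z ∉ C1))
        = (Finset.univ.filter (fun w : Fin n → ZMod 2 => ¬ ∃ y, ∃ c ∈ C1, w = Γ y + c)) := by
      apply Finset.filter_congr
      intro w _
      simp [hpred w]
    rw [this, Finset.sum_filter_add_sum_filter_not, hP1]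
  linarith
end
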